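/- Let λ > μ > 0 and let ŝ satisfy 0 < ŝ < s*(λ,μ). Set z̃ := (λ+μ−2ŝ)/√((λ+μ−2ŝ)² − 4λμ) and H_B(z) := sup{ sz − Λ(s;λ,μ) : s ≤ ŝ }. Then: H_B(z) = +∞ for z < 1 (the set is not bounded above); H_B(z) = (1/2)·(√((z−1)λ) − √((z+1)μ))² for 1 ≤ z ≤ z̃; and H_B(z) = ŝ·z − Λ(ŝ;λ,μ) for z > z̃. Moreover, for every z ∈ ℝ, sup{ sz − Λ(s;λ,μ) : s < ŝ } = sup{ sz − Λ(s;λ,μ) : s ≤ ŝ }. -/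

import Mathlib

open MeasureTheory Filter

/-- `s*(λ,μ) = (√λ − √μ)²/2`. -/
noncomputable def sStar (l m : ℝ) : ℝ := (Real.sqrt l - Real.sqrt m) ^ 2 / 2

/-- `Λ(s;λ,μ)`. -/
noncomputable def Lam (s l m : ℝ) : ℝ :=
  (l - m - Real.sqrt ((l + m - 2 * s) ^ 2 - 4 * l * m)) / 2

/-!
On `(-∞, s*)` the function `Λ = Λ(·;λ,μ)` is convex, with derivative
`Λ′(s) = (λ+μ-2s)/√((λ+μ-2s)²-4λμ)` increasing from `1` (as `s → -∞`) to `+∞`,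
so `s ↦ sz - Λ(s)` is concave. For `z < 1` it tends to `+∞` as `s → -∞`, because
`Λ(s) ≤ s - μ + √(λμ)`. For `z ≥ 1` it is bounded by `½(√((z-1)λ) - √((z+1)μ))²`
(Fenchel–Young); for `1 < z ≤ z̃ = Λ′(ŝ)` this bound is attained at the critical point
`Λ′(s) = z`, which lies left of `ŝ`, while at `z = 1` the bound `μ` is the limit as
`s → -∞`, via `s - Λ(s) = μ - 2λμ/(λ+μ-2s+√((λ+μ-2s)²-4λμ))`. For `z ≥ z̃` the tangent
line of `Λ` at `ŝ` shows that the function is nondecreasing on `(-∞, ŝ]`. Finally `Λ` is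
continuous, so excluding the endpoint `ŝ` does not change the supremum.
-/

open Topology

section General

variable {ι α : Type*} [CompleteLattice α] [TopologicalSpace α] [ClosedIicTopology α]

theorem le_iSup_subtype_of_tendsto {L : Filter ι} [L.NeBot] {p : ι → Prop} {f : ι → α} {a : α}
    (hf : Tendsto f L (𝓝 a)) (hp : ∀ᶠ i in L, p i) : a ≤ ⨆ i : {i // p i}, f i :=
  le_of_tendsto hf (hp.mono fun i hi => le_iSup (fun j : {i // p i} => f j) ⟨i, hi⟩)

theorem iSup_lt_eq_iSup_le_of_continuous {f : ℝ → α} (hf : Continuous f) (a : ℝ) :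
    ⨆ s : {s // s < a}, f s = ⨆ s : {s // s ≤ a}, f s :=
  le_antisymm (iSup_mono' fun s => ⟨⟨s, s.2.le⟩, le_rfl⟩) <| iSup_le fun s =>
    le_iSup_subtype_of_tendsto ((hf.tendsto s).mono_left nhdsWithin_le_nhds)
      (eventually_nhdsWithin_of_forall fun _ (hx : _ ∈ Set.Iio s.1) => hx.out.trans_le s.2)

end General

variable {l m s t z : ℝ}

theorem sStar_eq (hl : 0 ≤ l) (hm : 0 ≤ m) : sStar l m = (l + m) / 2 - √(l * m) := by
  rw [sStar, Real.sqrt_mul hl]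
  nlinarith [Real.sq_sqrt hl, Real.sq_sqrt hm]

theorem le_sStar_iff (hl : 0 ≤ l) (hm : 0 ≤ m) :
    s ≤ sStar l m ↔ 2 * √(l * m) ≤ l + m - 2 * s := by
  rw [sStar_eq hl hm]; constructor <;> intro h <;> linarith

theorem lt_sStar_iff (hl : 0 ≤ l) (hm : 0 ≤ m) :
    s < sStar l m ↔ 2 * √(l * m) < l + m - 2 * s := by
  rw [sStar_eq hl hm]; constructor <;> intro h <;> linarith

theorem half_sq_sqrt_sub_sqrt (hl : 0 ≤ l) (hm : 0 ≤ m) (hz : 1 ≤ z) :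
    1 / 2 * (√((z - 1) * l) - √((z + 1) * m)) ^ 2
      = (z * (l + m) - (l - m)) / 2 - √(z ^ 2 - 1) * √(l * m) := by
  have hprod : √((z - 1) * l) * √((z + 1) * m) = √(z ^ 2 - 1) * √(l * m) := by
    rw [← Real.sqrt_mul (by nlinarith), ← Real.sqrt_mul (by nlinarith)]
    ring_nf
  have h1 := Real.sq_sqrt (show 0 ≤ (z - 1) * l by nlinarith)
  have h2 := Real.sq_sqrt (show 0 ≤ (z + 1) * m by nlinarith)
  linear_combination 1 / 2 * h1 + 1 / 2 * h2 - hprod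

theorem mul_sub_Lam_le (hl : 0 ≤ l) (hm : 0 ≤ m) (hz : 1 ≤ z) (hs : s ≤ sStar l m) :
    s * z - Lam s l m ≤ (z * (l + m) - (l - m)) / 2 - √(z ^ 2 - 1) * √(l * m) := by
  rw [le_sStar_iff hl hm] at hs
  set u := l + m - 2 * s
  set E := √(l * m)
  set C := √(z ^ 2 - 1)
  have hE2 : E ^ 2 = l * m := Real.sq_sqrt (by positivity)
  have hC2 : C ^ 2 = z ^ 2 - 1 := Real.sq_sqrt (by nlinarith)
  have hCz : C ≤ z := by nlinarith [Real.sqrt_nonneg (z ^ 2 - 1)]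
  have hE0 : 0 ≤ E := Real.sqrt_nonneg _
  have hC0 : 0 ≤ C := Real.sqrt_nonneg _
  -- `(z u - 2 C E)² - (u² - 4 l m) = (C u - 2 z E)²`
  have key : √(u ^ 2 - 4 * l * m) ≤ z * u - 2 * C * E :=
    Real.sqrt_le_iff.2 ⟨by nlinarith, by nlinarith [sq_nonneg (C * u - 2 * z * E)]⟩
  simp only [Lam]
  linarith

/-- The critical point of `s ↦ s z - Λ(s)`, i.e. the solution of `Λ′(s) = z`, for `z > 1`. -/
noncomputable def sOpt (z l m : ℝ) : ℝ := (l + m) / 2 - z * √(l * m) / √(z ^ 2 - 1)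

theorem sOpt_mul_sub_Lam (hl : 0 ≤ l) (hm : 0 ≤ m) (hz : 1 < z) :
    sOpt z l m * z - Lam (sOpt z l m) l m
      = (z * (l + m) - (l - m)) / 2 - √(z ^ 2 - 1) * √(l * m) := by
  rw [Lam, sOpt]
  set E := √(l * m)
  set C := √(z ^ 2 - 1)
  have hE2 : E ^ 2 = l * m := Real.sq_sqrt (by positivity)
  have hC2 : C ^ 2 = z ^ 2 - 1 := Real.sq_sqrt (by nlinarith)
  have hC0 : 0 < C := Real.sqrt_pos.2 (by nlinarith)
  have hdisc : (l + m - 2 * ((l + m) / 2 - z * E / C)) ^ 2 - 4 * l * m = (2 * E / C) ^ 2 := by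
    field_simp
    linear_combination 4 * C ^ 2 * hE2 - 4 * E ^ 2 * hC2
  rw [hdisc, Real.sqrt_sq (by positivity)]
  field_simp
  linear_combination 2 * E * hC2

/-- `Λ′(t)`, the derivative of `Λ(·;λ,μ)` on `(-∞, s*)`. -/
noncomputable def LamDeriv (t l m : ℝ) : ℝ :=
  (l + m - 2 * t) / √((l + m - 2 * t) ^ 2 - 4 * l * m)

theorem sqrt_disc_pos (hl : 0 ≤ l) (hm : 0 ≤ m) (ht : t < sStar l m) :
    0 < √((l + m - 2 * t) ^ 2 - 4 * l * m) := by
  rw [lt_sStar_iff hl hm] at ht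
  have hE2 : √(l * m) ^ 2 = l * m := Real.sq_sqrt (by positivity)
  exact Real.sqrt_pos.2 (by nlinarith [Real.sqrt_nonneg (l * m)])

/-- `Λ′` is increasing and `Λ′(sOpt z) = z`, so `z ≤ Λ′(t)` forces `sOpt z ≤ t`. -/
theorem sOpt_le_of_le_LamDeriv (hl : 0 ≤ l) (hm : 0 ≤ m) (hz : 1 < z) (ht : t < sStar l m)
    (hzt : z ≤ LamDeriv t l m) : sOpt z l m ≤ t := by
  have hW := sqrt_disc_pos hl hm ht
  rw [LamDeriv, le_div_iff₀ hW] at hzt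
  rw [lt_sStar_iff hl hm] at ht
  rw [sOpt]
  set E := √(l * m)
  set C := √(z ^ 2 - 1)
  set u := l + m - 2 * t
  have hE2 : E ^ 2 = l * m := Real.sq_sqrt (by positivity)
  have hC2 : C ^ 2 = z ^ 2 - 1 := Real.sq_sqrt (by nlinarith)
  have hC0 : 0 < C := Real.sqrt_pos.2 (by nlinarith)
  have hW2 : √(u ^ 2 - 4 * l * m) ^ 2 = u ^ 2 - 4 * l * m := Real.sq_sqrt (Real.sqrt_pos.1 hW).le
  have hu0 : 0 ≤ u := by nlinarith [Real.sqrt_nonneg (l * m)]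
  have hsq : (u * C) ^ 2 ≤ (2 * (z * E)) ^ 2 := by
    nlinarith [mul_self_le_mul_self (by positivity) hzt]
  have huC : u ≤ 2 * (z * E) / C := by
    rw [le_div_iff₀ hC0]
    exact (pow_le_pow_iff_left₀ (by positivity) (by positivity) two_ne_zero).1 hsq
  have hu : u = l + m - 2 * t := rfl
  rw [mul_div_assoc] at huC
  linarith

theorem Lam_add_LamDeriv_mul_le (hl : 0 ≤ l) (hm : 0 ≤ m) (hs : s ≤ sStar l m)
    (ht : t < sStar l m) : Lam t l m + LamDeriv t l m * (s - t) ≤ Lam s l m := by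
  have hW := sqrt_disc_pos hl hm ht
  rw [le_sStar_iff hl hm] at hs
  rw [lt_sStar_iff hl hm] at ht
  rw [Lam, Lam, LamDeriv]
  set u := l + m - 2 * s
  set v := l + m - 2 * t
  set A := √(u ^ 2 - 4 * l * m)
  set W := √(v ^ 2 - 4 * l * m)
  have hE2 : √(l * m) ^ 2 = l * m := Real.sq_sqrt (by positivity)
  have hE0 := Real.sqrt_nonneg (l * m)
  have hA2 : A ^ 2 = u ^ 2 - 4 * l * m := Real.sq_sqrt (by nlinarith)
  have hW2 : W ^ 2 = v ^ 2 - 4 * l * m := Real.sq_sqrt (by nlinarith)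
  -- `(u v - 4 l m)² - (u² - 4 l m)(v² - 4 l m) = 4 l m (u - v)²`
  have hAW : A * W ≤ u * v - 4 * l * m := by
    apply abs_le_of_sq_le_sq' _ (by nlinarith) |>.2
    nlinarith [sq_nonneg (u - v), mul_nonneg hl hm]
  have hst : s - t = (v - u) / 2 := by ring
  rw [hst, div_mul_div_comm, ← sub_nonneg]
  have key : (l - m - A) / 2 - ((l - m - W) / 2 + v * (v - u) / (W * 2))
      = (u * v - 4 * l * m - A * W) / (2 * W) := by
    field_simp
    linear_combination hW2
  rw [key]
  exact div_nonneg (by linarith) (by positivity)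

theorem mul_sub_Lam_le_of_LamDeriv_le (hl : 0 ≤ l) (hm : 0 ≤ m) (hst : s ≤ t)
    (ht : t < sStar l m) (hz : LamDeriv t l m ≤ z) :
    s * z - Lam s l m ≤ t * z - Lam t l m := by
  have := Lam_add_LamDeriv_mul_le hl hm (hst.trans ht.le) ht
  nlinarith [mul_nonneg (sub_nonneg.2 hst) (sub_nonneg.2 hz)]

theorem Lam_le (hl : 0 ≤ l) (hm : 0 ≤ m) (hs : s ≤ sStar l m) :
    Lam s l m ≤ s - m + √(l * m) := by
  rw [le_sStar_iff hl hm] at hs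
  have hE2 : √(l * m) ^ 2 = l * m := Real.sq_sqrt (by positivity)
  have hA : l + m - 2 * s - 2 * √(l * m) ≤ √((l + m - 2 * s) ^ 2 - 4 * l * m) :=
    Real.le_sqrt_of_sq_le (by nlinarith [Real.sqrt_nonneg (l * m)])
  rw [Lam]
  linarith

theorem tendsto_linear_atBot_atTop {a : ℝ} (ha : a < 0) (b : ℝ) :
    Tendsto (fun s : ℝ => s * a + b) atBot atTop :=
  tendsto_atTop_add_const_right _ b ((tendsto_mul_const_atTop_of_neg ha).2 tendsto_id)

theorem tendsto_mul_sub_Lam_atBot (hl : 0 ≤ l) (hm : 0 ≤ m) (hz : z < 1) :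
    Tendsto (fun s => s * z - Lam s l m) atBot atTop := by
  refine tendsto_atTop_mono' atBot ?_ (tendsto_linear_atBot_atTop (sub_neg.2 hz) (m - √(l * m)))
  filter_upwards [eventually_le_atBot (sStar l m)] with s hs
  linarith [Lam_le hl hm hs]

theorem sub_Lam_eq (hl : 0 < l) (hm : 0 < m) (hs : s ≤ sStar l m) :
    s - Lam s l m
      = m - 2 * l * m / (l + m - 2 * s + √((l + m - 2 * s) ^ 2 - 4 * l * m)) := by
  rw [le_sStar_iff hl.le hm.le] at hs
  rw [Lam]
  set u := l + m - 2 * s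
  set A := √(u ^ 2 - 4 * l * m)
  have hE0 : 0 < √(l * m) := Real.sqrt_pos.2 (by positivity)
  have hE2 : √(l * m) ^ 2 = l * m := Real.sq_sqrt (by positivity)
  have hA2 : A ^ 2 = u ^ 2 - 4 * l * m := Real.sq_sqrt (by nlinarith)
  have hpos : 0 < u + A := by linarith [Real.sqrt_nonneg (u ^ 2 - 4 * l * m)]
  field_simp
  linear_combination hA2

theorem tendsto_sub_Lam_atBot (hl : 0 < l) (hm : 0 < m) :
    Tendsto (fun s => s - Lam s l m) atBot (𝓝 m) := by
  have hden :
      Tendsto (fun s => l + m - 2 * s + √((l + m - 2 * s) ^ 2 - 4 * l * m)) atBot atTop := by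
    refine tendsto_atTop_mono (fun s => ?_)
      (tendsto_linear_atBot_atTop (by norm_num : (-2 : ℝ) < 0) (l + m))
    linarith [Real.sqrt_nonneg ((l + m - 2 * s) ^ 2 - 4 * l * m)]
  have hlim := (tendsto_const_nhds (x := m)).sub
    ((tendsto_const_nhds (x := 2 * l * m)).div_atTop hden)
  rw [sub_zero] at hlim
  refine hlim.congr' ?_
  filter_upwards [eventually_le_atBot (sStar l m)] with s hs
  exact (sub_Lam_eq hl hm hs).symm

theorem continuous_mul_sub_Lam : Continuous fun s => s * z - Lam s l m := by
  unfold Lam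
  fun_prop

section Truncated

variable {shat : ℝ}

theorem iSup_mul_sub_Lam_eq_top (hl : 0 ≤ l) (hm : 0 ≤ m) (hz : z < 1) :
    ⨆ s : {s : ℝ // s ≤ shat}, ((s.1 * z - Lam s.1 l m : ℝ) : EReal) = ⊤ :=
  eq_top_iff.2 <| le_iSup_subtype_of_tendsto
    (EReal.tendsto_coe_nhds_top_iff.2 (tendsto_mul_sub_Lam_atBot hl hm hz))
    (eventually_le_atBot shat)

theorem not_bddAbove_mul_sub_Lam (hl : 0 ≤ l) (hm : 0 ≤ m) (hz : z < 1) :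
    ¬ BddAbove {y : ℝ | ∃ s ≤ shat, y = s * z - Lam s l m} := by
  rintro ⟨b, hb⟩
  obtain ⟨s, hlt, hs⟩ := (((tendsto_mul_sub_Lam_atBot hl hm hz).eventually_gt_atTop b).and
    (eventually_le_atBot shat)).exists
  exact (hb ⟨s, hs, rfl⟩).not_gt hlt

theorem iSup_mul_sub_Lam_eq_of_le_LamDeriv (hl : 0 < l) (hm : 0 < m) (hshat : shat < sStar l m)
    (hz : 1 ≤ z) (hzs : z ≤ LamDeriv shat l m) :
    ⨆ s : {s : ℝ // s ≤ shat}, ((s.1 * z - Lam s.1 l m : ℝ) : EReal)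
      = ((1 / 2 * (√((z - 1) * l) - √((z + 1) * m)) ^ 2 : ℝ) : EReal) := by
  rw [half_sq_sqrt_sub_sqrt hl.le hm.le hz]
  refine le_antisymm (iSup_le fun s => EReal.coe_le_coe_iff.2
    (mul_sub_Lam_le hl.le hm.le hz (s.2.trans hshat.le))) ?_
  rcases hz.eq_or_lt with rfl | hz
  · -- at `z = 1` the supremum `m` is only approached as `s → -∞`
    have hval : ((1 : ℝ) * (l + m) - (l - m)) / 2 - √(1 ^ 2 - 1) * √(l * m) = m := by
      norm_num
    simp only [hval, mul_one]
    exact le_iSup_subtype_of_tendsto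
      ((continuous_coe_real_ereal.tendsto m).comp (tendsto_sub_Lam_atBot hl hm))
      (eventually_le_atBot shat)
  · rw [← sOpt_mul_sub_Lam hl.le hm.le hz]
    exact le_iSup_of_le ⟨sOpt z l m, sOpt_le_of_le_LamDeriv hl.le hm.le hz hshat hzs⟩ le_rfl

theorem iSup_mul_sub_Lam_eq_of_LamDeriv_le (hl : 0 ≤ l) (hm : 0 ≤ m) (hshat : shat < sStar l m)
    (hz : LamDeriv shat l m ≤ z) :
    ⨆ s : {s : ℝ // s ≤ shat}, ((s.1 * z - Lam s.1 l m : ℝ) : EReal)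
      = ((shat * z - Lam shat l m : ℝ) : EReal) :=
  le_antisymm
    (iSup_le fun s => EReal.coe_le_coe_iff.2 (mul_sub_Lam_le_of_LamDeriv_le hl hm s.2 hshat hz))
    (le_iSup_of_le ⟨shat, le_rfl⟩ le_rfl)

end Truncated

theorem legendre_transform_Lam_truncated_general (l m : ℝ) (hlm : m < l) (hm : 0 < m)
    (shat : ℝ) (hshat1 : shat < sStar l m)
    (ztil : ℝ)
    (hztil : ztil = (l + m - 2 * shat) / Real.sqrt ((l + m - 2 * shat) ^ 2 - 4 * l * m)) :
    (∀ z : ℝ, z < 1 →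
      (⨆ s : {s : ℝ // s ≤ shat}, ((s.1 * z - Lam s.1 l m : ℝ) : EReal)) = ⊤
        ∧ ¬ BddAbove {y : ℝ | ∃ s ≤ shat, y = s * z - Lam s l m})
    ∧ (∀ z : ℝ, 1 ≤ z → z ≤ ztil →
      (⨆ s : {s : ℝ // s ≤ shat}, ((s.1 * z - Lam s.1 l m : ℝ) : EReal))
        = ((1 / 2 * (Real.sqrt ((z - 1) * l) - Real.sqrt ((z + 1) * m)) ^ 2 : ℝ) : EReal))
    ∧ (∀ z : ℝ, ztil < z →
      (⨆ s : {s : ℝ // s ≤ shat}, ((s.1 * z - Lam s.1 l m : ℝ) : EReal))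
        = ((shat * z - Lam shat l m : ℝ) : EReal))
    ∧ (∀ z : ℝ,
      (⨆ s : {s : ℝ // s < shat}, ((s.1 * z - Lam s.1 l m : ℝ) : EReal))
        = ⨆ s : {s : ℝ // s ≤ shat}, ((s.1 * z - Lam s.1 l m : ℝ) : EReal)) := by
  have hl : 0 < l := hm.trans hlm
  subst hztil
  exact ⟨fun z hz =>
      ⟨iSup_mul_sub_Lam_eq_top hl.le hm.le hz, not_bddAbove_mul_sub_Lam hl.le hm.le hz⟩,
    fun z hz hzs => iSup_mul_sub_Lam_eq_of_le_LamDeriv hl hm hshat1 hz hzs,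
    fun z hz => iSup_mul_sub_Lam_eq_of_LamDeriv_le hl.le hm.le hshat1 hz.le,
    fun z => iSup_lt_eq_iSup_le_of_continuous
      (continuous_coe_real_ereal.comp continuous_mul_sub_Lam) shat⟩

/-- for `0 < ŝ < s*(λ,μ)` and `z̃ = (λ+μ−2ŝ)/√((λ+μ−2ŝ)²−4λμ)`, the restricted
Legendre transform `H_B(z) = sup{sz − Λ(s;λ,μ) : s ≤ ŝ}` equals `+∞` for `z < 1` (and the set is
unbounded above), equals `(1/2)(√((z−1)λ) − √((z+1)μ))²` for `1 ≤ z ≤ z̃`, and equals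
`ŝz − Λ(ŝ;λ,μ)` for `z > z̃`; moreover the sup over `s < ŝ` coincides with the sup over
`s ≤ ŝ` (suprema taken in `EReal`). -/
theorem legendre_transform_Lam_truncated (l m : ℝ) (hlm : m < l) (hm : 0 < m)
    (shat : ℝ) (hshat0 : 0 < shat) (hshat1 : shat < sStar l m)
    (ztil : ℝ)
    (hztil : ztil = (l + m - 2 * shat) / Real.sqrt ((l + m - 2 * shat) ^ 2 - 4 * l * m)) :
    (∀ z : ℝ, z < 1 →
      (⨆ s : {s : ℝ // s ≤ shat}, ((s.1 * z - Lam s.1 l m : ℝ) : EReal)) = ⊤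
        ∧ ¬ BddAbove {y : ℝ | ∃ s ≤ shat, y = s * z - Lam s l m})
    ∧ (∀ z : ℝ, 1 ≤ z → z ≤ ztil →
      (⨆ s : {s : ℝ // s ≤ shat}, ((s.1 * z - Lam s.1 l m : ℝ) : EReal))
        = ((1 / 2 * (Real.sqrt ((z - 1) * l) - Real.sqrt ((z + 1) * m)) ^ 2 : ℝ) : EReal))
    ∧ (∀ z : ℝ, ztil < z →
      (⨆ s : {s : ℝ // s ≤ shat}, ((s.1 * z - Lam s.1 l m : ℝ) : EReal))
        = ((shat * z - Lam shat l m : ℝ) : EReal))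
    ∧ (∀ z : ℝ,
      (⨆ s : {s : ℝ // s < shat}, ((s.1 * z - Lam s.1 l m : ℝ) : EReal))
        = ⨆ s : {s : ℝ // s ≤ shat}, ((s.1 * z - Lam s.1 l m : ℝ) : EReal)) :=
  legendre_transform_Lam_truncated_general l m hlm hm shat hshat1 ztil hztil
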